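/- If [a_1, a_2, …, a_{2k+1}] is an additive continued fraction with all a_i positive integers, then it equals the subtractive continued fraction [a_1+1, 2^{[a_2−1]}, a_3+2, 2^{[a_4−1]}, …, a_{2k−1}+2, 2^{[a_{2k}−1]}, a_{2k+1}+1]_−, where 2^{[n]} denotes a string of n twos. Here [a_1,…,a_m] = 1/(a_1 + 1/(a_2 + ⋯ + 1/a_m)) and [b_1,…,b_ℓ]_− = 1/(b_1 − 1/(b_2 − ⋯ − 1/b_ℓ)). -/

import Mathlib

/-- Additive continued fraction `[a_1,…,a_m] = 1/(a_1 + 1/(a_2 + ⋯ + 1/a_m))`. -/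
def addCF : List ℚ → ℚ
  | [] => 0
  | a :: rest => 1 / (a + addCF rest)

/-- Subtractive continued fraction `[b_1,…,b_ℓ]₋ = 1/(b_1 − 1/(b_2 − ⋯ − 1/b_ℓ))`. -/
def subCF : List ℚ → ℚ
  | [] => 0
  | b :: rest => 1 / (b - subCF rest)

/-- Converts `(a_2, a_3, …, a_{2k+1})` into
`(2^{[a_2−1]}, a_3+2, 2^{[a_4−1]}, …, a_{2k−1}+2, 2^{[a_{2k}−1]}, a_{2k+1}+1)`. -/
def convTail : List ℕ → List ℚ
  | [a, b] => List.replicate (a - 1) 2 ++ [(b : ℚ) + 1]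
  | a :: b :: rest => List.replicate (a - 1) 2 ++ ((b : ℚ) + 2) :: convTail rest
  | _ => []

lemma addCF_nonneg (L : List ℕ) : 0 ≤ addCF (L.map fun x => (x : ℚ)) := by
  induction L with
  | nil => simp [addCF]
  | cons a t ih =>
    rw [show ((a :: t).map fun x => (x : ℚ)) = (a : ℚ) :: (t.map fun x => (x : ℚ)) by simp, addCF]
    exact one_div_nonneg.mpr (add_nonneg (Nat.cast_nonneg a) ih)

lemma twos (w : ℚ) (hw : 0 < w) : ∀ (n : ℕ) (M : List ℚ), subCF M = 1 - 1/w →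
    subCF (List.replicate n 2 ++ M) = 1 - 1/(w + n) := by
  intro n
  induction n with
  | zero => intro M h; simpa using h
  | succ n ih =>
    intro M h
    rw [List.replicate_succ, List.cons_append, subCF, ih M h]
    have h1 : (0:ℚ) < w + n := by positivity
    have h2 : (0:ℚ) < w + n + 1 := by positivity
    push_cast
    rw [show (2:ℚ) - (1 - 1/(w+n)) = (w+n+1)/(w+n) by field_simp; linarith]
    rw [one_div_div]
    field_simp
    linarith

lemma map_cons_cast (b : ℕ) (L : List ℕ) :
    ((b :: L).map fun x => (x : ℚ)) = (b : ℚ) :: (L.map fun x => (x : ℚ)) := by simp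

lemma map_nil_cast : (([] : List ℕ).map fun x => (x : ℚ)) = [] := by simp

lemma key : ∀ (n : ℕ) (L : List ℕ), L.length ≤ n → (∀ x ∈ L, 0 < x) →
    L.length % 2 = 0 → L ≠ [] →
    subCF (convTail L) = 1 - addCF (L.map fun x => (x : ℚ)) := by
  intro n
  induction n with
  | zero =>
    intro L hn _ _ hne
    interval_cases h : L.length <;> simp_all
  | succ n ih =>
    intro L hn hpos hlen hne
    match L with
    | [] => exact absurd rfl hne
    | [b] => simp at hlen
    | [b, c] =>
      have hb : 0 < b := hpos b (by simp)
      have hc : 0 < c := hpos c (by simp)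
      have hcq : (1:ℚ) ≤ (c:ℚ) := by exact_mod_cast hc
      have hcq0 : (0:ℚ) < c := by positivity
      have hw : (0:ℚ) < ((c:ℚ)+1)/c := by positivity
      have hsub : subCF [(c:ℚ)+1] = 1 - 1/(((c:ℚ)+1)/c) := by
        simp [subCF]; field_simp; ring
      have := twos _ hw (b-1) _ hsub
      show subCF (List.replicate (b-1) 2 ++ [(c:ℚ)+1]) = _
      rw [this]
      have hbc : ((b-1 : ℕ) : ℚ) = (b:ℚ) - 1 := by
        have : 1 ≤ b := hb
        push_cast [this]; ring
      rw [hbc]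
      rw [map_cons_cast, map_cons_cast, map_nil_cast]
      simp only [addCF]
      have hbq : (1:ℚ) ≤ (b:ℚ) := by exact_mod_cast hb
      have hbq0 : (0:ℚ) < b := by linarith
      have hd1 : ((c:ℚ)+1)/c + ((b:ℚ)-1) ≠ 0 := by
        have h1 : (0:ℚ) ≤ (b:ℚ) - 1 := by linarith
        positivity
      have hden : ((c:ℚ)+1)/c + ((b:ℚ)-1) = (b:ℚ) + 1/((c:ℚ)+0) := by
        field_simp
        ring
      rw [hden]
    | b :: c :: d :: rest' =>
      have hb : 0 < b := hpos b (by simp)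
      have hc : 0 < c := hpos c (by simp)
      have hrpos : ∀ x ∈ d :: rest', 0 < x := fun x hx => hpos x (by simp [hx])
      have hrlen : (d :: rest').length % 2 = 0 := by
        simp only [List.length_cons] at hlen ⊢; omega
      have hrn : (d :: rest').length ≤ n := by
        simp only [List.length_cons] at hn ⊢; omega
      have IH := ih (d :: rest') hrn hrpos hrlen (by simp)
      set A := addCF ((d :: rest').map fun x => (x:ℚ)) with hA
      have hA0 : 0 ≤ A := addCF_nonneg _
      have hcq : (1:ℚ) ≤ (c:ℚ) := by exact_mod_cast hc
      have hcA : (0:ℚ) < (c:ℚ) + A := by linarith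
      have hcA1 : (0:ℚ) < (c:ℚ) + 1 + A := by linarith
      have hw : (0:ℚ) < ((c:ℚ)+1+A)/((c:ℚ)+A) := by positivity
      have hsub : subCF (((c:ℚ)+2) :: convTail (d :: rest'))
          = 1 - 1/(((c:ℚ)+1+A)/((c:ℚ)+A)) := by
        rw [subCF, IH, one_div_div]
        have : (c:ℚ) + 2 - (1 - A) = (c:ℚ) + 1 + A := by ring
        rw [this]
        field_simp
        ring
      have := twos _ hw (b-1) _ hsub
      show subCF (List.replicate (b-1) 2 ++ ((c:ℚ)+2) :: convTail (d :: rest')) = _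
      rw [this]
      have hbc : ((b-1 : ℕ) : ℚ) = (b:ℚ) - 1 := by
        have : 1 ≤ b := hb
        push_cast [this]; ring
      rw [hbc]
      rw [map_cons_cast, map_cons_cast, addCF, addCF, ← hA]
      have hbq : (1:ℚ) ≤ (b:ℚ) := by exact_mod_cast hb
      have hbq0 : (0:ℚ) < b := by linarith
      have hd1 : ((c:ℚ)+1+A)/((c:ℚ)+A) + ((b:ℚ)-1) ≠ 0 := by
        have h1 : (0:ℚ) ≤ (b:ℚ) - 1 := by linarith
        positivity
      have hden : ((c:ℚ)+1+A)/((c:ℚ)+A) + ((b:ℚ)-1) = (b:ℚ) + 1/((c:ℚ)+A) := by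
        field_simp
        ring
      rw [hden]

theorem additive_to_subtractive (a₁ : ℕ) (rest : List ℕ) (h₁ : 0 < a₁)
    (hpos : ∀ x ∈ rest, 0 < x) (hlen : rest.length % 2 = 0) (hne : rest ≠ []) :
    addCF ((a₁ : ℚ) :: rest.map (fun x => (x : ℚ)))
      = subCF (((a₁ : ℚ) + 1) :: convTail rest) := by
  have hk := key rest.length rest le_rfl hpos hlen hne
  rw [addCF, subCF, hk]
  ring_nf
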